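/- arXiv:2401.12398 — 2 statements merged into one kernel-verified Lean document; each statement's English description precedes it below -/
import Mathlib

section
/- Let (Z, d) be a compact symmetric premetric space satisfying the quasi-triangle inequality with constant N ≥ 1 and admitting a Vitali covering constant N₀ (i.e., every finite family of balls has a disjoint subfamily whose N₀-enlarged balls cover the union). Suppose ν is a Borel probability measure on Z and C ≥ 1 is such that ν(B(ξ, r)) ≥ C⁻¹·r for all ξ ∈ Z and all 0 < r < diam(Z). Then the 1-dimensional Hausdorff measure of Z with respect to d is finite: H¹(Z) ≤ 2N·N₀·C. -/
open Set MeasureTheory ENNReal NNReal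

/-- Ball of a premetric. -/
def pball {Z : Type*} (d : Z → Z → ℝ) (x : Z) (r : ℝ) : Set Z := {y | d x y < r}

/-- Diameter of a set with respect to a premetric, valued in `ℝ≥0∞`. -/
noncomputable def ediam {Z : Type*} (d : Z → Z → ℝ) (U : Set Z) : ℝ≥0∞ :=
  ⨆ x ∈ U, ⨆ y ∈ U, ENNReal.ofReal (d x y)

/-- `s`-dimensional Hausdorff measure of a set with respect to a premetric,
defined via covers: `H^s(B) = lim_{ε→0} inf { Σ (diam Uᵢ)^s : B ⊆ ⋃ Uᵢ, diam Uᵢ ≤ ε }`. -/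
noncomputable def hMeas {Z : Type*} (d : Z → Z → ℝ) (s : ℝ) (B : Set Z) : ℝ≥0∞ :=
  ⨆ (ε : ℝ≥0∞) (_ : 0 < ε), ⨅ (U : ℕ → Set Z) (_ : B ⊆ ⋃ i, U i)
    (_ : ∀ i, ediam d (U i) ≤ ε), ∑' i, ediam d (U i) ^ s

/-- Hausdorff dimension of a set with respect to a premetric:
`inf { s > 0 : H^s = 0 }`. -/
noncomputable def hdim {Z : Type*} (d : Z → Z → ℝ) (B : Set Z) : ℝ :=
  sInf {s : ℝ | 0 < s ∧ hMeas d s B = 0}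

/-!
Cover `Z` by finitely many `r`-balls and extract by the Vitali property a subfamily `t` of pairwise
disjoint `r`-balls whose `N₀ r`-enlargements still cover `Z`. The disjoint balls each have
`ν`-measure at least `r / C`, so there are at most `C / r` of them, while the enlarged balls have
diameter at most `2 N N₀ r`. Hence `Z` has covers of arbitrarily small mesh with total length at
most `(C / r) · 2 N N₀ r = 2 N N₀ C`.
-/

section Premetric

variable {Z : Type*} (d : Z → Z → ℝ)

def HasVitaliConstant (N₀ : ℝ) : Prop :=
  ∀ (n : ℕ) (ξ : Fin n → Z) (r : Fin n → ℝ),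
    ∃ t : Finset (Fin n),
      ((t : Set (Fin n)).Pairwise fun i j =>
        Disjoint (pball d (ξ i) (r i)) (pball d (ξ j) (r j))) ∧
      (⋃ i, pball d (ξ i) (r i)) ⊆ ⋃ i ∈ t, pball d (ξ i) (N₀ * r i)

theorem isOpen_pball [TopologicalSpace Z] (hcont : Continuous fun p : Z × Z => d p.1 p.2)
    (x : Z) (r : ℝ) : IsOpen (pball d x r) :=
  isOpen_Iio.preimage (hcont.comp (continuous_const.prodMk continuous_id))

@[simp]
theorem ediam_empty : ediam d ∅ = 0 := by
  simp [ediam]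

theorem ediam_pball_le {N : ℝ} (hN : 0 ≤ N) (hsymm : ∀ x y, d x y = d y x)
    (htri : ∀ x y z, d x z ≤ N * (d x y + d y z)) (ξ : Z) (R : ℝ) :
    ediam d (pball d ξ R) ≤ ENNReal.ofReal (2 * N * R) := by
  refine iSup₂_le fun x (hx : d ξ x < R) => iSup₂_le fun y (hy : d ξ y < R) => ?_
  refine ENNReal.ofReal_le_ofReal ?_
  calc d x y ≤ N * (d ξ x + d ξ y) := hsymm x ξ ▸ htri x ξ y
    _ ≤ N * (R + R) := by gcongr
    _ = 2 * N * R := by ring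

theorem hMeas_eq_zero_of_ediam_eq_zero {s : ℝ} (hs : 0 < s) {B : Set Z} (hB : ediam d B = 0) :
    hMeas d s B = 0 := by
  refine nonpos_iff_eq_zero.1 (iSup₂_le fun ε _ => ?_)
  refine (iInf₂_le (fun _ => B) (subset_iUnion (fun _ : ℕ => B) 0)).trans (iInf_le_of_le
    (fun _ => hB ▸ zero_le) ?_)
  simp [hB, ENNReal.zero_rpow_of_pos hs]

/-- A finite cover, padded with empty sets, is admissible in the definition of `hMeas`. -/
theorem iInf_cover_le_sum_finset {s : ℝ} (hs : 0 < s) {B : Set Z} {ε : ℝ≥0∞} {ι : Type*}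
    (t : Finset ι) (U : ι → Set Z) (hcov : B ⊆ ⋃ i ∈ t, U i)
    (hdiam : ∀ i ∈ t, ediam d (U i) ≤ ε) :
    ⨅ (V : ℕ → Set Z) (_ : B ⊆ ⋃ k, V k) (_ : ∀ k, ediam d (V k) ≤ ε),
      ∑' k, ediam d (V k) ^ s ≤ ∑ i ∈ t, ediam d (U i) ^ s := by
  obtain ⟨f, hf⟩ := Countable.exists_injective_nat t
  let V : ℕ → Set Z := Function.extend f (fun i : t => U i) fun _ => ∅
  have hV : ∀ i : t, V (f i) = U i := fun i => hf.extend_apply _ _ i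
  have hVcov : B ⊆ ⋃ k, V k := fun z hz => by
    obtain ⟨i, hi, hzi⟩ := mem_iUnion₂.1 (hcov hz)
    exact mem_iUnion.2 ⟨f ⟨i, hi⟩, (hV ⟨i, hi⟩).symm ▸ hzi⟩
  have hVdiam : ∀ k, ediam d (V k) ≤ ε := fun k => by
    by_cases hk : ∃ i, f i = k
    · obtain ⟨i, rfl⟩ := hk
      exact hV i ▸ hdiam i i.2
    · simp [V, Function.extend_apply' _ _ _ hk]
  have hVsum : (fun k => ediam d (V k) ^ s) =
      Function.extend f (fun i : t => ediam d (U i) ^ s) 0 := by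
    funext k
    simp only [V, Function.apply_extend (fun S => ediam d S ^ s)]
    congr 1
    funext
    simp [ENNReal.zero_rpow_of_pos hs]
  refine (iInf₂_le V hVcov).trans (iInf_le_of_le hVdiam (le_of_eq ?_))
  rw [hVsum, tsum_extend_zero hf, Finset.tsum_subtype t fun i => ediam d (U i) ^ s]

theorem hMeas_le_of_forall_finset_cover {s : ℝ} (hs : 0 < s) {B : Set Z} {M : ℝ≥0∞}
    {ι : Type*} (h : ∀ ε : ℝ≥0∞, 0 < ε → ∃ (t : Finset ι) (U : ι → Set Z),
      B ⊆ ⋃ i ∈ t, U i ∧ (∀ i ∈ t, ediam d (U i) ≤ ε) ∧ ∑ i ∈ t, ediam d (U i) ^ s ≤ M) :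
    hMeas d s B ≤ M := by
  refine iSup₂_le fun ε hε => ?_
  obtain ⟨t, U, hcov, hdiam, hsum⟩ := h ε hε
  exact (iInf_cover_le_sum_finset d hs t U hcov hdiam).trans hsum

theorem exists_finset_pairwiseDisjoint_pball_cover [TopologicalSpace Z] [CompactSpace Z]
    (hcont : Continuous fun p : Z × Z => d p.1 p.2) (hdiag : ∀ x, d x x = 0) {N₀ : ℝ}
    (hV : HasVitaliConstant d N₀) {r : ℝ} (hr : 0 < r) :
    ∃ t : Finset Z, (t : Set Z).PairwiseDisjoint (fun ξ => pball d ξ r) ∧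
      univ ⊆ ⋃ ξ ∈ t, pball d ξ (N₀ * r) := by
  classical
  obtain ⟨F, hF⟩ := isCompact_univ.elim_finite_subcover (fun ξ => pball d ξ r)
    (fun ξ => isOpen_pball d hcont ξ r)
    fun z _ => mem_iUnion.2 ⟨z, show d z z < r by rw [hdiag]; exact hr⟩
  let ξ : Fin F.card → Z := fun i => F.equivFin.symm i
  obtain ⟨t, hdisj, hcov⟩ := hV F.card ξ fun _ => r
  refine ⟨t.image ξ, ?_, fun z _ => ?_⟩
  · rw [Finset.coe_image]
    rintro _ ⟨i, hi, rfl⟩ _ ⟨j, hj, rfl⟩ hne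
    exact hdisj hi hj fun hij => hne (hij ▸ rfl)
  · obtain ⟨x, hx, hzx⟩ := mem_iUnion₂.1 (hF (mem_univ z))
    have hz : z ∈ ⋃ i, pball d (ξ i) r :=
      mem_iUnion.2 ⟨F.equivFin ⟨x, hx⟩, by simpa [ξ] using hzx⟩
    obtain ⟨i, hi, hzi⟩ := mem_iUnion₂.1 (hcov hz)
    exact mem_iUnion₂.2 ⟨ξ i, Finset.mem_image_of_mem ξ hi, hzi⟩

end Premetric

theorem card_mul_le_measure_univ {α ι : Type*} [MeasurableSpace α] (μ : Measure α)
    (t : Finset ι) {s : ι → Set α} (hd : (t : Set ι).PairwiseDisjoint s)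
    (hm : ∀ i ∈ t, MeasurableSet (s i)) {m : ℝ≥0∞} (hlow : ∀ i ∈ t, m ≤ μ (s i)) :
    t.card * m ≤ μ univ :=
  calc t.card * m = ∑ _ ∈ t, m := by simp
    _ ≤ ∑ i ∈ t, μ (s i) := Finset.sum_le_sum hlow
    _ = μ (⋃ i ∈ t, s i) := (measure_biUnion_finset hd hm).symm
    _ ≤ μ univ := measure_mono (subset_univ _)

theorem exists_pos_lt_and_mul_le {a ε : ℝ≥0∞} (ha : 0 < a) (hε : 0 < ε) {K : ℝ} (hK : 0 < K) :
    ∃ r : ℝ, 0 < r ∧ ENNReal.ofReal r < a ∧ ENNReal.ofReal (K * r) ≤ ε := by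
  obtain ⟨ρ, -, hρ, hρa⟩ := ENNReal.lt_iff_exists_real_btwn.1 ha
  obtain ⟨δ, -, hδ, hδε⟩ := ENNReal.lt_iff_exists_real_btwn.1 hε
  rw [ENNReal.ofReal_pos] at hρ hδ
  refine ⟨min ρ (δ / K), by positivity, ?_, ?_⟩
  · exact (ENNReal.ofReal_le_ofReal (min_le_left _ _)).trans_lt hρa
  · refine le_trans (ENNReal.ofReal_le_ofReal ?_) hδε.le
    calc K * min ρ (δ / K) ≤ K * (δ / K) := by gcongr; exact min_le_right _ _
      _ = δ := mul_div_cancel₀ δ hK.ne'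

theorem stmt3_general {Z : Type*} [TopologicalSpace Z] [CompactSpace Z]
    [MeasurableSpace Z] [BorelSpace Z]
    (d : Z → Z → ℝ) (N N₀ C : ℝ) (hN : 1 ≤ N) (hN₀ : 1 ≤ N₀) (hC : 1 ≤ C)
    (hcont : Continuous fun p : Z × Z => d p.1 p.2)
    (hzero : ∀ x y, d x y = 0 ↔ x = y)
    (hsymm : ∀ x y, d x y = d y x)
    (htri : ∀ x y z, d x z ≤ N * (d x y + d y z))
    (hvitali : ∀ (n : ℕ) (ξ : Fin n → Z) (r : Fin n → ℝ),
      ∃ t : Finset (Fin n),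
        ((t : Set (Fin n)).Pairwise fun i j =>
          Disjoint (pball d (ξ i) (r i)) (pball d (ξ j) (r j))) ∧
        (⋃ i, pball d (ξ i) (r i)) ⊆ ⋃ i ∈ t, pball d (ξ i) (N₀ * r i))
    (ν : Measure Z) [IsProbabilityMeasure ν]
    (hlower : ∀ (ξ : Z) (r : ℝ), 0 < r → ENNReal.ofReal r < ediam d Set.univ →
      ENNReal.ofReal (C⁻¹ * r) ≤ ν (pball d ξ r)) :
    hMeas d 1 Set.univ ≤ ENNReal.ofReal (2 * N * N₀ * C) := by
  rcases eq_or_ne (ediam d univ) 0 with hD | hD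
  · simp [hMeas_eq_zero_of_ediam_eq_zero d one_pos hD]
  refine hMeas_le_of_forall_finset_cover d one_pos (ι := Z) fun ε hε => ?_
  obtain ⟨r, hr, hrD, hrε⟩ := exists_pos_lt_and_mul_le (pos_iff_ne_zero.2 hD) hε
    (by positivity : 0 < 2 * N * N₀)
  obtain ⟨t, hdisj, hcov⟩ := exists_finset_pairwiseDisjoint_pball_cover d hcont
    (fun x => (hzero x x).2 rfl) hvitali hr
  have hdiam (ξ : Z) : ediam d (pball d ξ (N₀ * r)) ≤ ENNReal.ofReal (2 * N * N₀ * r) :=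
    mul_assoc (2 * N) N₀ r ▸ ediam_pball_le d (by linarith) hsymm htri ξ (N₀ * r)
  have hcard : t.card * ENNReal.ofReal (C⁻¹ * r) ≤ 1 := measure_univ (μ := ν) ▸
    card_mul_le_measure_univ ν t hdisj (fun ξ _ => (isOpen_pball d hcont ξ r).measurableSet)
      fun ξ _ => hlower ξ r hr hrD
  refine ⟨t, fun ξ => pball d ξ (N₀ * r), hcov, fun ξ _ => (hdiam ξ).trans hrε, ?_⟩
  calc ∑ ξ ∈ t, ediam d (pball d ξ (N₀ * r)) ^ (1 : ℝ)
      ≤ ∑ _ ∈ t, ENNReal.ofReal (2 * N * N₀ * r) := by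
        simp only [ENNReal.rpow_one]; exact Finset.sum_le_sum fun ξ _ => hdiam ξ
    _ = t.card * ENNReal.ofReal (C⁻¹ * r) * ENNReal.ofReal (2 * N * N₀ * C) := by
        rw [Finset.sum_const, nsmul_eq_mul, mul_assoc (t.card : ℝ≥0∞),
          ← ENNReal.ofReal_mul (by positivity)]
        congr 2
        field_simp
    _ ≤ ENNReal.ofReal (2 * N * N₀ * C) := by
        simpa using mul_le_mul_left hcard (ENNReal.ofReal (2 * N * N₀ * C))

/-- Finiteness of the one-dimensional Hausdorff measure: a compact symmetric
premetric space with quasi-triangle constant `N` and Vitali covering constant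
`N₀`, carrying a Borel probability measure with lower ball bounds
`ν(B(ξ,r)) ≥ C⁻¹ r` for `0 < r < diam Z`, satisfies `H¹(Z) ≤ 2 N N₀ C`. -/
theorem stmt3 {Z : Type*} [TopologicalSpace Z] [CompactSpace Z]
    [MeasurableSpace Z] [BorelSpace Z]
    (d : Z → Z → ℝ) (N N₀ C : ℝ) (hN : 1 ≤ N) (hN₀ : 1 ≤ N₀) (hC : 1 ≤ C)
    (hcont : Continuous fun p : Z × Z => d p.1 p.2)
    (hnonneg : ∀ x y, 0 ≤ d x y)
    (hzero : ∀ x y, d x y = 0 ↔ x = y)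
    (hsymm : ∀ x y, d x y = d y x)
    (htri : ∀ x y z, d x z ≤ N * (d x y + d y z))
    (hvitali : ∀ (n : ℕ) (ξ : Fin n → Z) (r : Fin n → ℝ),
      ∃ t : Finset (Fin n),
        ((t : Set (Fin n)).Pairwise fun i j =>
          Disjoint (pball d (ξ i) (r i)) (pball d (ξ j) (r j))) ∧
        (⋃ i, pball d (ξ i) (r i)) ⊆ ⋃ i ∈ t, pball d (ξ i) (N₀ * r i))
    (ν : Measure Z) [IsProbabilityMeasure ν]
    (hlower : ∀ (ξ : Z) (r : ℝ), 0 < r → ENNReal.ofReal r < ediam d Set.univ →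
      ENNReal.ofReal (C⁻¹ * r) ≤ ν (pball d ξ r)) :
    hMeas d 1 Set.univ ≤ ENNReal.ofReal (2 * N * N₀ * C) :=
  stmt3_general d N N₀ C hN hN₀ hC hcont hzero hsymm htri hvitali ν hlower
end

section
/- Let (a_n) and (b_n) be sequences of positive real numbers, and suppose the series s ↦ Σₙ e^{-s·aₙ} and s ↦ Σₙ e^{-s·bₙ} have abscissae of convergence δ₁, δ₂ ∈ (0, ∞) respectively. Then for any p, q > 0, the abscissa of convergence δ of the series s ↦ Σₙ e^{-s·(p·aₙ + q·bₙ)} satisfies δ ≤ (p/δ₁ + q/δ₂)^{-1}. -/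
/-!
Put `K = p/δ₁ + q/δ₂` and let `s > K⁻¹`. With the weights `θ₁ = p/(δ₁K)`, `θ₂ = q/(δ₂K)`, which sum
to `1`, the exponent `-s(p aₙ + q bₙ)` is the convex combination of `-sKδ₁ aₙ` and `-sKδ₂ bₙ`, so by
convexity of `exp` (Hölder's inequality in its termwise form) the combined series is dominated by
`θ₁ Σ e^{-sKδ₁ aₙ} + θ₂ Σ e^{-sKδ₂ bₙ}`. Both converge because `sK > 1`; hence the combined series
converges beyond `K⁻¹`, and its abscissa is at most `K⁻¹`.
-/

/-- `δ` is the abscissa of convergence of the series `s ↦ Σₙ exp (-s cₙ)`: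
the series converges for every `s > δ` and diverges for every `0 < s < δ`. -/
def IsAbscissa (c : ℕ → ℝ) (δ : ℝ) : Prop :=
  (∀ s : ℝ, δ < s → Summable fun n => Real.exp (-s * c n)) ∧
  (∀ s : ℝ, 0 < s → s < δ → ¬ Summable fun n => Real.exp (-s * c n))

open Real

theorem summable_exp_convex_combination {ι : Type*} {u v : ι → ℝ} {θ₁ θ₂ : ℝ} (hθ₁ : 0 ≤ θ₁)
    (hθ₂ : 0 ≤ θ₂) (hθ : θ₁ + θ₂ = 1) (hu : Summable fun n => exp (u n))
    (hv : Summable fun n => exp (v n)) :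
    Summable fun n => exp (θ₁ * u n + θ₂ * v n) :=
  ((hu.mul_left θ₁).add (hv.mul_left θ₂)).of_nonneg_of_le (fun _ => (exp_pos _).le)
    fun n => convexOn_exp.2 (Set.mem_univ (u n)) (Set.mem_univ (v n)) hθ₁ hθ₂ hθ

theorem summable_exp_neg_mul_add {ι : Type*} {a b : ι → ℝ} {x y p q : ℝ} (hx : 0 < x)
    (hy : 0 < y) (hp : 0 < p) (hq : 0 < q) (ha : Summable fun n => exp (-x * a n))
    (hb : Summable fun n => exp (-y * b n)) :
    Summable fun n => exp (-(p / x + q / y)⁻¹ * (p * a n + q * b n)) := by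
  set s := (p / x + q / y)⁻¹
  have hs : 0 < s := by positivity
  have hθ : s * p / x + s * q / y = 1 := by
    simp only [s, mul_div_assoc, ← mul_add]
    exact inv_mul_cancel₀ (by positivity)
  convert summable_exp_convex_combination (by positivity) (by positivity) hθ ha hb using 3 with n
  field_simp
  ring

theorem IsAbscissa.le_of_summable {c : ℕ → ℝ} {δ t : ℝ} (hδ : IsAbscissa c δ) (ht : 0 ≤ t)
    (hsum : ∀ s, t < s → Summable fun n => exp (-s * c n)) : δ ≤ t := by
  by_contra! htδ
  have hmid : t < (t + δ) / 2 := by linarith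
  exact hδ.2 _ (by linarith) (by linarith) (hsum _ hmid)

theorem stmt9_general (a b : ℕ → ℝ)
    (δ₁ δ₂ : ℝ) (hδ₁ : 0 < δ₁) (hδ₂ : 0 < δ₂)
    (haδ : IsAbscissa a δ₁) (hbδ : IsAbscissa b δ₂)
    (p q : ℝ) (hp : 0 < p) (hq : 0 < q)
    (δ : ℝ) (hδ : IsAbscissa (fun n => p * a n + q * b n) δ) :
    δ ≤ (p / δ₁ + q / δ₂)⁻¹ := by
  set K := p / δ₁ + q / δ₂
  have hK : 0 < K := by positivity
  refine hδ.le_of_summable (inv_nonneg.2 hK.le) fun s hs => ?_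
  have hsK : 1 < s * K := by rwa [← inv_lt_iff_one_lt_mul₀ hK]
  have hs : 0 < s := lt_trans (inv_pos.2 hK) hs
  have hx : δ₁ < s * K * δ₁ := lt_mul_left hδ₁ hsK
  have hy : δ₂ < s * K * δ₂ := lt_mul_left hδ₂ hsK
  have hcomb := summable_exp_neg_mul_add (by positivity) (by positivity) hp hq
    (haδ.1 _ hx) (hbδ.1 _ hy)
  have hrate : (p / (s * K * δ₁) + q / (s * K * δ₂))⁻¹ = s := by
    simp only [K]
    field_simp
  rwa [hrate] at hcomb

/-- For positive sequences with abscissae `δ₁, δ₂ ∈ (0,∞)` and `p, q > 0`, the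
abscissa of convergence `δ` of `s ↦ Σₙ exp(-s (p aₙ + q bₙ))` satisfies
`δ ≤ (p/δ₁ + q/δ₂)⁻¹`. -/
theorem stmt9 (a b : ℕ → ℝ) (ha : ∀ n, 0 < a n) (hb : ∀ n, 0 < b n)
    (δ₁ δ₂ : ℝ) (hδ₁ : 0 < δ₁) (hδ₂ : 0 < δ₂)
    (haδ : IsAbscissa a δ₁) (hbδ : IsAbscissa b δ₂)
    (p q : ℝ) (hp : 0 < p) (hq : 0 < q)
    (δ : ℝ) (hδ : IsAbscissa (fun n => p * a n + q * b n) δ) :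
    δ ≤ (p / δ₁ + q / δ₂)⁻¹ :=
  stmt9_general a b δ₁ δ₂ hδ₁ hδ₂ haδ hbδ p q hp hq δ hδ
end
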